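/- In a partial cube G contained in the class S4 (the bipartite graphs whose geodesic convexity satisfies the S4 separation property), the convex hull of every isometric cycle is gated. -/

import Mathlib

/-- The hypercube graph on `Λ → Bool`: two vertices are adjacent iff they differ
in exactly one coordinate. -/
def Qcube (Λ : Type*) : SimpleGraph (Λ → Bool) where
  Adj x y := ∃ f, x f ≠ y f ∧ ∀ g, g ≠ f → x g = y g
  symm := by
    constructor
    rintro x y ⟨f, hf, h⟩
    exact ⟨f, Ne.symm hf, fun g hg => (h g hg).symm⟩
  loopless := by
    constructor
    rintro x ⟨f, hf, _⟩
    exact hf rfl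

variable {Λ : Type*}

/-- The graph induced by the hypercube on a set `V` of vertices. -/
def pcGraph (V : Set (Λ → Bool)) : SimpleGraph V := (Qcube Λ).induce V

/-- `V` determines a partial cube: the induced graph is connected and its
graph distance coincides with the Hamming distance. -/
def IsPartialCube (V : Set (Λ → Bool)) : Prop :=
  (pcGraph V).Connected ∧
    ∀ x y : V, (pcGraph V).dist x y = Set.ncard {f | (x : Λ → Bool) f ≠ (y : Λ → Bool) f}

/-- `W` is a convex subgraph of the partial cube on `V`. -/
def ConvexIn (V W : Set (Λ → Bool)) : Prop :=
  W ⊆ V ∧ ∀ u v w : V, (u : Λ → Bool) ∈ W → (v : Λ → Bool) ∈ W →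
    (pcGraph V).dist u w + (pcGraph V).dist w v = (pcGraph V).dist u v →
      (w : Λ → Bool) ∈ W

/-- `W` is a gated subgraph of the partial cube on `V`: every vertex has a gate in `W`. -/
def GatedIn (V W : Set (Λ → Bool)) : Prop :=
  W ⊆ V ∧ ∀ x : V, ∃ g : V, (g : Λ → Bool) ∈ W ∧
    ∀ y : V, (y : Λ → Bool) ∈ W →
      (pcGraph V).dist x y = (pcGraph V).dist x g + (pcGraph V).dist g y

/-- The convex hull of a set `A` inside the partial cube on `V`. -/
def convexHullIn (V A : Set (Λ → Bool)) : Set (Λ → Bool) :=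
  ⋂₀ {W | ConvexIn V W ∧ A ⊆ W}

/-- The gated hull of a set `A` inside the partial cube on `V`. -/
def gatedHullIn (V A : Set (Λ → Bool)) : Set (Λ → Bool) :=
  ⋂₀ {W | GatedIn V W ∧ A ⊆ W}

/-- The interval between `u` and `v` in the partial cube on `V`. -/
def intervalIn (V : Set (Λ → Bool)) (u v : V) : Set V :=
  {w | (pcGraph V).dist u w + (pcGraph V).dist w v = (pcGraph V).dist u v}

/-- Contraction of the Θ-class of coordinate `f`: delete coordinate `f`. -/
def contr (f : Λ) (x : Λ → Bool) : {g : Λ // g ≠ f} → Bool := fun g => x g.1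

/-- Contraction of a whole set of coordinates `B`. -/
def proj (B : Set Λ) (x : Λ → Bool) : {g : Λ // g ∉ B} → Bool := fun g => x g.1

/-- The Θ-class `E_f` crosses `S`: `S` meets both halfspaces of coordinate `f`. -/
def Crosses (f : Λ) (S : Set (Λ → Bool)) : Prop :=
  (∃ x ∈ S, x f = true) ∧ (∃ x ∈ S, x f = false)

/-- The Θ-class `E_f` (of edges of the graph on `V`) is disjoint from `S`:
no edge in class `f` has an endpoint in `S`. -/
def DisjointFrom (f : Λ) (V S : Set (Λ → Bool)) : Prop :=
  ∀ x ∈ V, ∀ y ∈ V, (Qcube Λ).Adj x y → x f ≠ y f → x ∉ S ∧ y ∉ S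

/-- Adjacency in a cycle on `ZMod n` (for `n = 2` this is `K₂`). -/
def cycleAdj (n : ℕ) (x y : ZMod n) : Prop := x ≠ y ∧ (y = x + 1 ∨ x = y + 1)

/-- The cycle graph on `ZMod n`. -/
def cycGraph (n : ℕ) : SimpleGraph (ZMod n) where
  Adj x y := cycleAdj n x y
  symm := by
    constructor
    rintro x y ⟨h1, h2⟩
    exact ⟨Ne.symm h1, h2.symm⟩
  loopless := by
    constructor
    rintro x ⟨h1, _⟩
    exact h1 rfl

/-- The Cartesian product of the cycles/edges `ZMod (F i)`. -/
def edgeCycleProd {m : ℕ} (F : Fin m → ℕ) : SimpleGraph (∀ i, ZMod (F i)) where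
  Adj x y := ∃ i, cycleAdj (F i) (x i) (y i) ∧ ∀ j, j ≠ i → x j = y j
  symm := by
    constructor
    rintro x y ⟨i, ⟨h1, h2⟩, h3⟩
    exact ⟨i, ⟨Ne.symm h1, h2.symm⟩, fun j hj => (h3 j hj).symm⟩
  loopless := by
    constructor
    rintro x ⟨i, ⟨h1, _⟩, _⟩
    exact h1 rfl

/-- A graph is (isomorphic to) a Cartesian product of edges and even cycles. -/
def IsEdgeCycleProduct {α : Type*} (H : SimpleGraph α) : Prop :=
  ∃ (m : ℕ) (F : Fin m → ℕ), (∀ i, Even (F i) ∧ 2 ≤ F i) ∧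
    Nonempty (H ≃g edgeCycleProd F)

/-- The vertex set of `Q₃⁻`, the 3-cube minus one vertex. -/
def Q3minusSet : Set (Fin 3 → Bool) := {x : Fin 3 → Bool | x ≠ fun _ => true}

/-- A partial cube is hypercellular if no pc-minor of it (a contraction of a
convex subgraph, i.e. of a restriction) is isomorphic to `Q₃⁻`. -/
def Hypercellular (V : Set (Λ → Bool)) : Prop :=
  IsPartialCube V ∧ ∀ (B : Set Λ) (W : Set (Λ → Bool)), ConvexIn V W →
    IsEmpty (pcGraph (proj B '' W) ≃g pcGraph Q3minusSet)

/-- A cell of the partial cube on `V`: a convex subgraph isomorphic to a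
Cartesian product of edges and even cycles. -/
def IsCellIn (V X : Set (Λ → Bool)) : Prop :=
  ConvexIn V X ∧ IsEdgeCycleProduct (pcGraph X)

/-- The Pasch axiom, equivalent to the `S₄` separation property for bipartite
graphs: for `x ∈ I(u,v)` and `y ∈ I(u,w)`, the intervals `I(v,y)` and `I(w,x)`
intersect. -/
def PaschIn (V : Set (Λ → Bool)) : Prop :=
  ∀ u v w x y : V, x ∈ intervalIn V u v → y ∈ intervalIn V u w →
    (intervalIn V v y ∩ intervalIn V w x).Nonempty


/-!
In a partial cube the graph distance is the Hamming distance, so `w ∈ I(u, v)` means that `u` and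
`w` differ only in coordinates where `w` and `v` agree. An isometric cycle has even length `2k`,
and its edges `i` and `i + k` flip the same coordinate; so antipodal vertices differ exactly on
the set `F` of coordinates flipped by the cycle, and every coordinate outside `F` is constant on
the convex hull `K` of the cycle.

For a vertex `x` let `p` be a nearest point of `K`. If `x` and `p` differed in some `f ∈ F`, take
a cycle edge `u m` flipping `f` with `m` on the side of `x`, and the antipode `v` of `u`. Then
`p ∈ I(u, v)` and `m ∈ I(u, x)`, so the Pasch axiom gives `z ∈ I(v, m) ∩ I(x, p)`; this `z` lies
in `K` on the side of `x` with respect to `f`, hence is closer to `x` than `p`. So `x` and `p`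
differ only outside `F`, where all of `K` agrees with `p`, which makes `p` the gate of `x`.
-/

open Set
open scoped symmDiff

theorem Bool.eq_of_ne_of_ne {a b c : Bool} (hab : a ≠ b) (hbc : b ≠ c) : a = c :=
  (Bool.eq_not_iff.mpr hab).trans (Bool.eq_not_iff.mpr hbc.symm).symm

theorem Set.ncard_symmDiff_add_ncard_inter {α : Type*} {A B : Set α} (hA : A.Finite)
    (hB : B.Finite) : (A ∆ B).ncard + 2 * (A ∩ B).ncard = A.ncard + B.ncard := by
  have hunion : (A ∆ B ∪ A ∩ B).ncard = (A ∆ B).ncard + (A ∩ B).ncard :=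
    Set.ncard_union_eq (disjoint_symmDiff_inf A B) (hA.symmDiff hB) (hA.inter_of_left B)
  rw [show A ∆ B ∪ A ∩ B = A ∪ B from symmDiff_sup_inf A B] at hunion
  have := Set.ncard_union_add_ncard_inter A B hA hB
  omega

theorem Nat.Iio_add_one_eq_insert (t : ℕ) : Set.Iio (t + 1) = insert t (Set.Iio t) :=
  Order.Iio_succ_eq_insert t

theorem Nat.injOn_Iio_add_one {α : Type*} {f : ℕ → α} {k : ℕ} (h₀ : InjOn f (Iio k))
    (h₁ : InjOn (fun s => f (s + 1)) (Iio k)) (hk : f k ≠ f 0) : InjOn f (Iio (k + 1)) := by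
  have hlast : ∀ a < k, f a ≠ f k := by
    intro a ha hak
    cases a with
    | zero => exact hk hak.symm
    | succ a =>
      have : a = k - 1 := h₁ (mem_Iio.mpr (by omega)) (mem_Iio.mpr (by omega))
        (show f (a + 1) = f (k - 1 + 1) by rwa [Nat.sub_add_cancel (by omega)])
      omega
  intro a ha b hb hab
  simp only [mem_Iio] at ha hb
  rcases Nat.lt_or_ge a k with ha' | ha' <;> rcases Nat.lt_or_ge b k with hb' | hb'
  · exact h₀ ha' hb' hab
  · exact absurd (hab.trans (by rw [show b = k by omega])) (hlast a ha')
  · exact absurd (hab.symm.trans (by rw [show a = k by omega])) (hlast b hb')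
  · omega

namespace PartialCube

open SimpleGraph

def diffSet (x y : Λ → Bool) : Set Λ := {f | x f ≠ y f}

theorem diffSet_comm (x y : Λ → Bool) : diffSet x y = diffSet y x := by
  ext g; exact ne_comm

@[simp]
theorem diffSet_self (x : Λ → Bool) : diffSet x x = ∅ := by
  ext g; simp [diffSet]

theorem diffSet_eq_symmDiff (x y z : Λ → Bool) : diffSet x z = diffSet x y ∆ diffSet y z := by
  ext g
  simp only [diffSet, Set.mem_symmDiff, Set.mem_ofPred_eq]
  cases x g <;> cases y g <;> cases z g <;> decide

section FlipSequence

variable {w : ℕ → Λ → Bool} {e : ℕ → Λ} (hw : ∀ s, diffSet (w s) (w (s + 1)) = {e s})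
include hw

theorem diffSet_zero_succ (t : ℕ) :
    diffSet (w 0) (w (t + 1)) = diffSet (w 0) (w t) ∆ {e t} := by
  rw [diffSet_eq_symmDiff _ (w t), hw]

theorem diffSet_zero_subset_image (t : ℕ) : diffSet (w 0) (w t) ⊆ e '' Iio t := by
  induction t with
  | zero => simp
  | succ t ih =>
    rw [diffSet_zero_succ hw, Nat.Iio_add_one_eq_insert, image_insert_eq]
    exact symmDiff_le_sup.trans (union_subset (ih.trans (subset_insert _ _))
      (singleton_subset_iff.mpr (mem_insert _ _)))

theorem diffSet_zero_finite (t : ℕ) : (diffSet (w 0) (w t)).Finite :=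
  ((finite_Iio t).image e).subset (diffSet_zero_subset_image hw t)

theorem diffSet_zero_eq_image {t : ℕ} (ht : InjOn e (Iio t)) :
    diffSet (w 0) (w t) = e '' Iio t := by
  induction t with
  | zero => simp
  | succ t ih =>
    have hnew : e t ∉ e '' Iio t := fun ⟨s, hs, hst⟩ =>
      (ne_of_lt hs) (ht (mem_Iio.mpr (Nat.lt_succ_of_lt hs)) (mem_Iio.mpr t.lt_succ_self) hst)
    rw [diffSet_zero_succ hw, ih (ht.mono (Iio_subset_Iio t.le_succ)),
      (disjoint_singleton_right.mpr hnew).symmDiff_eq_sup, Nat.Iio_add_one_eq_insert,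
      image_insert_eq]
    exact union_singleton

theorem injOn_of_ncard_diffSet_zero {t : ℕ} (ht : (diffSet (w 0) (w t)).ncard = t) :
    InjOn e (Iio t) := by
  refine injOn_of_ncard_image_eq (le_antisymm (ncard_image_le (finite_Iio t)) ?_)
  calc (Iio t).ncard = (diffSet (w 0) (w t)).ncard := by rw [ncard_Iio_nat, ht]
    _ ≤ (e '' Iio t).ncard := ncard_le_ncard (diffSet_zero_subset_image hw t)
        ((finite_Iio t).image e)

theorem ncard_diffSet_zero_mod_two (t : ℕ) : (diffSet (w 0) (w t)).ncard % 2 = t % 2 := by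
  induction t with
  | zero => simp
  | succ t ih =>
    have h := Set.ncard_symmDiff_add_ncard_inter (diffSet_zero_finite hw t) (finite_singleton (e t))
    rw [← diffSet_zero_succ hw, ncard_singleton] at h
    omega

end FlipSequence

section CycleGraph

variable {n : ℕ}

theorem cycGraph_adj_add_one (hn : 1 < n) (i : ZMod n) : (cycGraph n).Adj i (i + 1) := by
  have : Fact (1 < n) := ⟨hn⟩
  exact ⟨fun h => one_ne_zero (left_eq_add.mp h), Or.inl rfl⟩

theorem cycGraph_exists_walk_add_natCast (hn : 1 < n) (i : ZMod n) (t : ℕ) :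
    ∃ p : (cycGraph n).Walk i (i + t), p.length = t := by
  induction t with
  | zero => exact ⟨Walk.nil.copy rfl (by simp), by simp⟩
  | succ t ih =>
    obtain ⟨p, hp⟩ := ih
    exact ⟨(p.concat (cycGraph_adj_add_one hn _)).copy rfl (by push_cast; ring), by simp [hp]⟩

theorem exists_intCast_eq_sub_of_walk {i j : ZMod n} (p : (cycGraph n).Walk i j) :
    ∃ s : ℤ, (s : ZMod n) = j - i ∧ s.natAbs ≤ p.length := by
  induction p with
  | nil => exact ⟨0, by simp, by simp⟩
  | @cons a b d h p ih =>
    obtain ⟨s, hs, hlen⟩ := ih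
    rw [Walk.length_cons]
    rcases h.2 with rfl | rfl
    · exact ⟨s + 1, by push_cast [hs]; ring, by omega⟩
    · exact ⟨s - 1, by push_cast [hs]; ring, by omega⟩

theorem cycGraph_dist (hn : 1 < n) (i j : ZMod n) :
    (cycGraph n).dist i j = (j - i).valMinAbs.natAbs := by
  have : NeZero n := ⟨by omega⟩
  set m := (j - i).valMinAbs.natAbs
  obtain ⟨p, hp⟩ : ∃ p : (cycGraph n).Walk i j, p.length = m := by
    rcases Int.natAbs_eq (j - i).valMinAbs with h | h
    · have hj : i + (m : ZMod n) = j := by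
        rw [← Int.cast_natCast, ← h, ZMod.coe_valMinAbs]; ring
      obtain ⟨p, hp⟩ := cycGraph_exists_walk_add_natCast hn i m
      exact ⟨p.copy rfl hj, by simpa using hp⟩
    · have hi : j + (m : ZMod n) = i := by
        rw [← Int.cast_natCast, ← neg_eq_iff_eq_neg.mpr h, Int.cast_neg, ZMod.coe_valMinAbs]
        ring
      obtain ⟨p, hp⟩ := cycGraph_exists_walk_add_natCast hn j m
      exact ⟨(p.copy rfl hi).reverse, by simpa using hp⟩
  obtain ⟨q, hq⟩ := Reachable.exists_walk_length_eq_dist ⟨p⟩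
  obtain ⟨s, hs, hsq⟩ := exists_intCast_eq_sub_of_walk q
  refine le_antisymm (hp ▸ dist_le p) ?_
  calc m ≤ s.natAbs :=
        ZMod.natAbs_min_of_le_div_two n _ _ (by rw [ZMod.coe_valMinAbs, hs])
          (ZMod.natAbs_valMinAbs_le _)
    _ ≤ _ := hq ▸ hsq

theorem cycGraph_dist_add_natCast (hn : 1 < n) (i : ZMod n) {t : ℕ} (ht : t ≤ n) :
    (cycGraph n).dist i (i + t) = min t (n - t) := by
  have : NeZero n := ⟨by omega⟩
  rw [cycGraph_dist hn, add_sub_cancel_left, ZMod.valMinAbs_natAbs_eq_min, ZMod.val_natCast]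
  rcases ht.lt_or_eq with ht | rfl
  · rw [Nat.mod_eq_of_lt ht]
  · simp

end CycleGraph

section IsometricCycle

variable {n : ℕ} {c : ZMod n → Λ → Bool} {e : ZMod n → Λ}
  (he : ∀ i, diffSet (c i) (c (i + 1)) = {e i})
include he

theorem diffSet_arc_step (i : ZMod n) (s : ℕ) :
    diffSet (c (i + s)) (c (i + (s + 1 : ℕ))) = {e (i + s)} := by
  rw [Nat.cast_succ, ← add_assoc, he]

theorem diffSet_arc_subset (i : ZMod n) (t : ℕ) :
    diffSet (c i) (c (i + t)) ⊆ (fun s : ℕ => e (i + s)) '' Iio t := by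
  simpa only [Nat.cast_zero, add_zero] using
    diffSet_zero_subset_image (w := fun s : ℕ => c (i + s)) (diffSet_arc_step he i) t

theorem diffSet_arc_eq_image (i : ZMod n) {t : ℕ}
    (ht : InjOn (fun s : ℕ => e (i + s)) (Iio t)) :
    diffSet (c i) (c (i + t)) = (fun s : ℕ => e (i + s)) '' Iio t := by
  simpa only [Nat.cast_zero, add_zero] using
    diffSet_zero_eq_image (w := fun s : ℕ => c (i + s)) (diffSet_arc_step he i) ht

theorem injOn_arc_of_ncard (i : ZMod n) {t : ℕ} (ht : (diffSet (c i) (c (i + t))).ncard = t) :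
    InjOn (fun s : ℕ => e (i + s)) (Iio t) :=
  injOn_of_ncard_diffSet_zero (w := fun s : ℕ => c (i + s)) (diffSet_arc_step he i)
    (by simpa only [Nat.cast_zero, add_zero] using ht)

theorem even_of_flips : Even n := by
  have h := ncard_diffSet_zero_mod_two (w := fun s : ℕ => c (0 + s)) (diffSet_arc_step he 0) n
  simp only [Nat.cast_zero, ZMod.natCast_self, add_zero, diffSet_self, ncard_empty] at h
  exact Nat.even_iff.mpr h.symm

theorem apply_eq_apply_zero_of_notMem_range [NeZero n] {g : Λ} (hg : g ∉ range e)
    (i : ZMod n) :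
    c i g = c 0 g := by
  by_contra h
  have harc := diffSet_arc_subset he 0 i.val
  rw [zero_add, ZMod.natCast_zmod_val] at harc
  obtain ⟨s, -, hs⟩ := harc (Ne.symm h)
  exact hg ⟨_, hs⟩

variable (hdist : ∀ i (t : ℕ), t ≤ n → (diffSet (c i) (c (i + t))).ncard = min t (n - t))
include hdist

theorem injOn_arc (i : ZMod n) {t : ℕ} (ht : 2 * t ≤ n) :
    InjOn (fun s : ℕ => e (i + s)) (Iio t) :=
  injOn_arc_of_ncard he i (by rw [hdist i t (by omega)]; omega)

theorem flip_add_half {k : ℕ} (hk : n = 2 * k) (u : ZMod n) : e (u + k) = e u := by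
  rcases Nat.eq_zero_or_pos k with rfl | hk₀
  · simp
  by_contra hne
  have h₁ : InjOn (fun s : ℕ => e (u + s)) (Iio (k + 1)) := by
    refine Nat.injOn_Iio_add_one (injOn_arc he hdist u (by omega)) ?_ (by simpa using hne)
    convert injOn_arc he hdist (u + 1) (t := k) (by omega) using 3
    push_cast; ring
  have h₂ := congrArg ncard (diffSet_arc_eq_image he u h₁)
  rw [hdist u (k + 1) (by omega), h₁.ncard_image, ncard_Iio_nat] at h₂
  omega

theorem diffSet_add_half [NeZero n] {k : ℕ} (hk : n = 2 * k) (j : ZMod n) :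
    diffSet (c j) (c (j + k)) = range e := by
  rw [diffSet_arc_eq_image he j (injOn_arc he hdist j (by omega))]
  refine Subset.antisymm (image_subset_iff.mpr fun _ _ => mem_range_self _) ?_
  rintro _ ⟨u, rfl⟩
  set t := (u - j).val
  have hu : j + t = u := by rw [ZMod.natCast_zmod_val]; ring
  rcases Nat.lt_or_ge t k with ht | ht
  · exact ⟨t, ht, by simp only [hu]⟩
  · refine ⟨t - k, mem_Iio.mpr (by have := ZMod.val_lt (u - j); omega), ?_⟩
    change e (j + (t - k : ℕ)) = e u
    rw [← flip_add_half he hdist hk, add_assoc, ← Nat.cast_add, Nat.sub_add_cancel ht, hu]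

theorem exists_oriented_edge [NeZero n] {k : ℕ} (hk : n = 2 * k) (a : ZMod n) (b : Bool) :
    ∃ u m : ZMod n, diffSet (c u) (c m) = {e a} ∧ c m (e a) = b ∧
      range e ⊆ diffSet (c u) (c (u + k)) := by
  by_cases h : c (a + 1) (e a) = b
  · exact ⟨a, a + 1, he a, h, (diffSet_add_half he hdist hk a).ge⟩
  · have hflip : e a ∈ diffSet (c a) (c (a + 1)) := by rw [he]; rfl
    refine ⟨a + 1, a, by rw [diffSet_comm, he], ?_, (diffSet_add_half he hdist hk _).ge⟩
    exact Bool.eq_of_ne_of_ne hflip h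

end IsometricCycle

section ConvexHull

variable {V A W : Set (Λ → Bool)}

theorem subset_convexHullIn : A ⊆ convexHullIn V A :=
  fun _ hx => mem_sInter.mpr fun _ hW => hW.2 hx

theorem convexHullIn_subset (hW : ConvexIn V W) (hAW : A ⊆ W) : convexHullIn V A ⊆ W :=
  sInter_subset_of_mem ⟨hW, hAW⟩

theorem convexIn_self : ConvexIn V V :=
  ⟨subset_rfl, fun _ _ w _ _ _ => w.2⟩

theorem convexIn_convexHullIn (hA : A ⊆ V) : ConvexIn V (convexHullIn V A) :=
  ⟨convexHullIn_subset convexIn_self hA, fun u v w hu hv huv => mem_sInter.mpr fun W hW =>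
    hW.1.2 u v w (mem_sInter.mp hu W hW) (mem_sInter.mp hv W hW) huv⟩

end ConvexHull

theorem diffSet_eq_singleton_of_adj {V : Set (Λ → Bool)} {x y : V} (h : (pcGraph V).Adj x y) :
    ∃ f, diffSet (x : Λ → Bool) y = {f} := by
  obtain ⟨f, hf, hrest⟩ := h
  exact ⟨f, Subset.antisymm (fun g hg => not_imp_comm.mp (hrest g) hg)
    (singleton_subset_iff.mpr hf)⟩

section Metric

variable {V : Set (Λ → Bool)} (hV : IsPartialCube V)
include hV

theorem dist_eq_ncard_diffSet (x y : V) :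
    (pcGraph V).dist x y = (diffSet (x : Λ → Bool) y).ncard :=
  hV.2 x y

theorem diffSet_finite (x y : V) : (diffSet (x : Λ → Bool) y).Finite := by
  by_contra h
  have hxy : x = y := (hV.1.preconnected x y).dist_eq_zero_iff.mp
    (by rw [dist_eq_ncard_diffSet hV, Infinite.ncard h])
  exact h (by simp [hxy])

theorem mem_intervalIn_iff {u v w : V} :
    w ∈ intervalIn V u v ↔ Disjoint (diffSet (u : Λ → Bool) w) (diffSet (w : Λ → Bool) v) := by
  have h := Set.ncard_symmDiff_add_ncard_inter (diffSet_finite hV u w) (diffSet_finite hV w v)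
  rw [← diffSet_eq_symmDiff] at h
  change (pcGraph V).dist u w + (pcGraph V).dist w v = (pcGraph V).dist u v ↔ _
  rw [dist_eq_ncard_diffSet hV, dist_eq_ncard_diffSet hV, dist_eq_ncard_diffSet hV,
    disjoint_iff_inter_eq_empty, ← ncard_eq_zero ((diffSet_finite hV u w).inter_of_left _)]
  omega

theorem apply_eq_of_mem_intervalIn {u v w : V} (hw : w ∈ intervalIn V u v) {g : Λ}
    (hg : (u : Λ → Bool) g = (v : Λ → Bool) g) : (w : Λ → Bool) g = (u : Λ → Bool) g := by
  by_contra h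
  exact disjoint_left.mp ((mem_intervalIn_iff hV).mp hw) (Ne.symm h)
    fun h' => h (h'.trans hg.symm)

theorem convexIn_setOf_apply_eq (g : Λ) (b : Bool) : ConvexIn V {x ∈ V | x g = b} :=
  ⟨sep_subset _ _, fun _ _ w hu hv huv =>
    ⟨w.2, (apply_eq_of_mem_intervalIn hV huv (hu.2.trans hv.2.symm)).trans hu.2⟩⟩

variable {K : Set (Λ → Bool)} {F : Set Λ}
  (hconst : ∀ g ∉ F, ∀ y ∈ K, ∀ z ∈ K, y g = z g)
  (hanti : ∀ f ∈ F, ∀ b : Bool, ∃ u m v : V, ↑u ∈ K ∧ ↑m ∈ K ∧ ↑v ∈ K ∧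
    diffSet (u : Λ → Bool) m = {f} ∧ (m : Λ → Bool) f = b ∧ F ⊆ diffSet (u : Λ → Bool) v)
include hconst hanti

theorem disjoint_diffSet_of_forall_dist_le (hS4 : PaschIn V) (hK : ConvexIn V K) {x p : V}
    (hp : ↑p ∈ K) (hmin : ∀ y : V, ↑y ∈ K → (pcGraph V).dist x p ≤ (pcGraph V).dist x y) :
    Disjoint (diffSet (x : Λ → Bool) p) F := by
  refine disjoint_right.mpr fun f hfF hfxp => ?_
  obtain ⟨u, m, v, hu, hm, hv, hum, hmf, hFuv⟩ := hanti f hfF ((x : Λ → Bool) f)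
  have hpuv : p ∈ intervalIn V u v := (mem_intervalIn_iff hV).mpr <|
    disjoint_left.mpr fun g hup hpv => by
      by_cases hg : g ∈ F
      · exact hFuv hg (Bool.eq_of_ne_of_ne hup hpv)
      · exact hup (hconst g hg _ hu _ hp)
  have hmux : m ∈ intervalIn V u x := (mem_intervalIn_iff hV).mpr <|
    disjoint_left.mpr fun g hum' hmx => by
      rw [hum, mem_singleton_iff] at hum'
      exact hmx (hum' ▸ hmf)
  obtain ⟨z, hzvm, hzxp⟩ := hS4 u v x p m hpuv hmux
  have hzK : ↑z ∈ K := hK.2 v m z hv hm hzvm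
  have hvf : (v : Λ → Bool) f = (x : Λ → Bool) f :=
    (Bool.eq_of_ne_of_ne (Ne.symm (hFuv hfF))
      (hum ▸ mem_singleton f : f ∈ diffSet (u : Λ → Bool) m)).trans hmf
  have hzf : (z : Λ → Bool) f = (x : Λ → Bool) f :=
    (apply_eq_of_mem_intervalIn hV hzvm (hvf.trans hmf.symm)).trans hvf
  have hzp : 1 ≤ (pcGraph V).dist z p :=
    (hV.1.preconnected z p).pos_dist_of_ne fun h => hfxp (h ▸ hzf).symm
  have hxzp : (pcGraph V).dist x z + (pcGraph V).dist z p = (pcGraph V).dist x p := hzxp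
  have := hmin z hzK
  omega

theorem gatedIn_of_antipodal (hS4 : PaschIn V) (hK : ConvexIn V K) (hne : K.Nonempty) :
    GatedIn V K := by
  refine ⟨hK.1, fun x => ?_⟩
  obtain ⟨y₀, hy₀⟩ := hne
  set p := Function.argminOn (fun y : V => (pcGraph V).dist x y)
    {y : V | (y : Λ → Bool) ∈ K} ⟨⟨y₀, hK.1 hy₀⟩, hy₀⟩
  have hp : (p : Λ → Bool) ∈ K := Function.argminOn_mem _ {y : V | (y : Λ → Bool) ∈ K} _
  have hxpF := disjoint_diffSet_of_forall_dist_le hV hconst hanti hS4 hK hp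
    fun y hy => Function.argminOn_le _ {y : V | (y : Λ → Bool) ∈ K} hy
  refine ⟨p, hp, fun y hy => ((mem_intervalIn_iff hV).mpr ?_).symm⟩
  exact disjoint_left.mpr fun g hxp hpy =>
    hpy (hconst g (disjoint_left.mp hxpF hxp) _ hp _ hy)

end Metric

end PartialCube

open PartialCube in
theorem stmt13_general (V : Set (Λ → Bool)) (hV : IsPartialCube V) (hS4 : PaschIn V)
    (n : ℕ) (hn : 3 ≤ n) (c : ZMod n → V)
    (hadj : ∀ i, (pcGraph V).Adj (c i) (c (i + 1)))
    (hiso : ∀ i j, (pcGraph V).dist (c i) (c j) = (cycGraph n).dist i j) :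
    GatedIn V (convexHullIn V {x | ∃ i, ↑(c i) = x}) := by
  have : NeZero n := ⟨by omega⟩
  choose e he using fun i => diffSet_eq_singleton_of_adj (hadj i)
  have hdist (i : ZMod n) (t : ℕ) (ht : t ≤ n) :
      (diffSet (c i : Λ → Bool) (c (i + t))).ncard = min t (n - t) := by
    rw [← dist_eq_ncard_diffSet hV, hiso, cycGraph_dist_add_natCast (by omega) i ht]
  obtain ⟨k, hk⟩ := even_of_flips he
  have hcK (i : ZMod n) : (c i : Λ → Bool) ∈ convexHullIn V {x | ∃ i, ↑(c i) = x} :=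
    subset_convexHullIn ⟨i, rfl⟩
  refine gatedIn_of_antipodal hV (F := range e) ?_ ?_ hS4
    (convexIn_convexHullIn (by rintro _ ⟨i, rfl⟩; exact (c i).2)) ⟨_, hcK 0⟩
  · intro g hg y hy z hz
    have hK : convexHullIn V {x | ∃ i, ↑(c i) = x} ⊆ {x ∈ V | x g = (c 0 : Λ → Bool) g} :=
      convexHullIn_subset (convexIn_setOf_apply_eq hV _ _) <| by
        rintro _ ⟨i, rfl⟩; exact ⟨(c i).2, apply_eq_apply_zero_of_notMem_range he hg i⟩
    exact (hK hy).2.trans (hK hz).2.symm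
  · rintro _ ⟨a, rfl⟩ b
    obtain ⟨u, m, hum, hmb, hFu⟩ := exists_oriented_edge he hdist (by omega : n = 2 * k) a b
    exact ⟨c u, c m, c (u + k), hcK u, hcK m, hcK _, hum, hmb, hFu⟩

/-- In a partial cube satisfying the `S₄` separation property (Pasch axiom),
the convex hull of every isometric cycle is gated. -/
theorem stmt13 (V : Set (Λ → Bool)) (hV : IsPartialCube V) (hS4 : PaschIn V)
    (n : ℕ) (hn : 3 ≤ n) (c : ZMod n → V) (hinj : Function.Injective c)
    (hadj : ∀ i, (pcGraph V).Adj (c i) (c (i + 1)))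
    (hiso : ∀ i j, (pcGraph V).dist (c i) (c j) = (cycGraph n).dist i j) :
    GatedIn V (convexHullIn V {x | ∃ i, ↑(c i) = x}) :=
  stmt13_general V hV hS4 n hn c hadj hiso
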